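/- arXiv:1306.0842 — 2 statements merged into one kernel-verified Lean document; each statement's English description precedes it below -/
import Mathlib

section
/- With notation as above, if Δ > 0 then the choice α* = Δ/(Δ + ‖f* − μ‖²) satisfies 0 < α* ≤ 1 and gives Δ_{α*} − Δ = −Δ²/(Δ + ‖f* − μ‖²) < 0; i.e., the shrinkage estimator μ̂_{α*} = α* f* + (1−α*) μ̂ has strictly smaller risk than the empirical mean μ̂. -/
/-!
Expanding the square, `‖α f* + (1 - α) μ̂ - μ‖² = α² ‖f* - μ‖² + 2α(1 - α) ⟪f* - μ, μ̂ - μ⟫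
+ (1 - α)² ‖μ̂ - μ‖²`, and the cross term has expectation zero because `μ̂` is unbiased.
Hence `Δ_α = α² ‖f* - μ‖² + (1 - α)² Δ`, a quadratic in `α` minimised at `α*`, where its value
is `Δ - Δ² / (Δ + ‖f* - μ‖²)`.
-/

open MeasureTheory ProbabilityTheory
open scoped RealInnerProductSpace

section Shrinkage

variable {H : Type*} [NormedAddCommGroup H] [InnerProductSpace ℝ H]

theorem norm_smul_add_one_sub_smul_sub_sq (α : ℝ) (f y μ : H) :
    ‖α • f + (1 - α) • y - μ‖ ^ 2 =
      α ^ 2 * ‖f - μ‖ ^ 2 + 2 * α * (1 - α) * ⟪f - μ, y - μ⟫ + (1 - α) ^ 2 * ‖y - μ‖ ^ 2 := by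
  have hsplit : α • f + (1 - α) • y - μ = α • (f - μ) + (1 - α) • (y - μ) := by module
  rw [hsplit, norm_add_sq_real, norm_smul, norm_smul, real_inner_smul_left,
    real_inner_smul_right, mul_pow, mul_pow, Real.norm_eq_abs, Real.norm_eq_abs, sq_abs, sq_abs]
  ring

variable {Ω : Type*} [MeasurableSpace Ω] {P : Measure Ω}

theorem integral_inv_card_smul_sum {ι : Type*} [Fintype ι] [Nonempty ι] {Xs : ι → Ω → H}
    (hint : ∀ i, Integrable (Xs i) P) {μ : H} (hμ : ∀ i, ∫ ω, Xs i ω ∂P = μ) :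
    ∫ ω, (Fintype.card ι : ℝ)⁻¹ • ∑ i, Xs i ω ∂P = μ := by
  rw [integral_smul, integral_finsetSum _ fun i _ => hint i]
  simp only [hμ, Finset.sum_const, Finset.card_univ, ← Nat.cast_smul_eq_nsmul ℝ, smul_smul]
  rw [inv_mul_cancel₀ (Nat.cast_ne_zero.2 Fintype.card_ne_zero), one_smul]

variable [CompleteSpace H]

theorem integral_norm_shrink_sub_sq [IsProbabilityMeasure P] {Y : Ω → H} (hY : MemLp Y 2 P)
    {μ : H} (hμ : ∫ ω, Y ω ∂P = μ) (α : ℝ) (f : H) :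
    ∫ ω, ‖α • f + (1 - α) • Y ω - μ‖ ^ 2 ∂P =
      α ^ 2 * ‖f - μ‖ ^ 2 + (1 - α) ^ 2 * ∫ ω, ‖Y ω - μ‖ ^ 2 ∂P := by
  have hcentred : MemLp (fun ω => Y ω - μ) 2 P := hY.sub (memLp_const μ)
  have hint : Integrable (fun ω => Y ω - μ) P := hcentred.integrable one_le_two
  have hcross : ∫ ω, ⟪f - μ, Y ω - μ⟫ ∂P = 0 := by
    rw [integral_inner hint, integral_sub (hY.integrable one_le_two) (integrable_const μ), hμ,
      integral_const, probReal_univ, one_smul, sub_self, inner_zero_right]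
  simp_rw [norm_smul_add_one_sub_smul_sub_sq]
  have hcross_int : Integrable (fun ω => 2 * α * (1 - α) * ⟪f - μ, Y ω - μ⟫) P :=
    (hint.const_inner _).const_mul _
  have hconst_cross_int : Integrable
      (fun ω => α ^ 2 * ‖f - μ‖ ^ 2 + 2 * α * (1 - α) * ⟪f - μ, Y ω - μ⟫) P :=
    (integrable_const _).add hcross_int
  rw [integral_add hconst_cross_int (hcentred.norm.integrable_sq.const_mul _),
    integral_add (integrable_const _) hcross_int,
    integral_const, probReal_univ, one_smul, integral_const_mul, integral_const_mul, hcross,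
    mul_zero, add_zero]

end Shrinkage

theorem sq_mul_add_one_sub_sq_mul_sub_of_eq_div {Δ B α : ℝ} (hne : Δ + B ≠ 0)
    (hα : α = Δ / (Δ + B)) :
    α ^ 2 * B + (1 - α) ^ 2 * Δ - Δ = -(Δ ^ 2 / (Δ + B)) := by
  subst hα
  field_simp
  ring

theorem shrinkage_strictly_improves_general
    {Ω : Type*} [MeasurableSpace Ω] (P : Measure Ω) [IsProbabilityMeasure P]
    {H : Type*} [NormedAddCommGroup H] [InnerProductSpace ℝ H] [CompleteSpace H]
    [MeasurableSpace H] [BorelSpace H]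
    (n : ℕ) (hn : 0 < n)
    (X : Ω → H) (Xs : Fin n → Ω → H)
    (hmeas : ∀ i, Measurable (Xs i))
    (hX2 : MemLp X 2 P)
    (hident : ∀ i, Measure.map (Xs i) P = Measure.map X P)
    (μ : H) (hμ : μ = ∫ ω, X ω ∂P)
    (emp : Ω → H) (hemp : emp = fun ω => (n : ℝ)⁻¹ • (∑ i, Xs i ω))
    (Δ : ℝ) (hΔ : Δ = ∫ ω, ‖emp ω - μ‖ ^ 2 ∂P)
    (hΔpos : 0 < Δ)
    (fstar : H)
    (αstar : ℝ) (hαstar : αstar = Δ / (Δ + ‖fstar - μ‖ ^ 2))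
    (Δαstar : ℝ)
    (hΔαstar : Δαstar = ∫ ω, ‖αstar • fstar + (1 - αstar) • emp ω - μ‖ ^ 2 ∂P) :
    (0 < αstar ∧ αstar ≤ 1) ∧
      Δαstar - Δ = -(Δ ^ 2 / (Δ + ‖fstar - μ‖ ^ 2)) ∧
      Δαstar < Δ := by
  have hsum_pos : 0 < Δ + ‖fstar - μ‖ ^ 2 := by positivity
  have hXs : ∀ i, IdentDistrib (Xs i) X P P := fun i =>
    ⟨(hmeas i).aemeasurable, hX2.aestronglyMeasurable.aemeasurable, hident i⟩
  have hXs2 : ∀ i, MemLp (Xs i) 2 P := fun i => (hXs i).memLp_iff.2 hX2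
  have : Nonempty (Fin n) := ⟨⟨0, hn⟩⟩
  have hemp2 : MemLp emp 2 P := by
    rw [hemp]
    convert (memLp_finsetSum' Finset.univ fun i _ => hXs2 i).const_smul (n : ℝ)⁻¹ using 1
    ext ω
    simp only [Pi.smul_apply, Finset.sum_apply]
  have hemp_mean : ∫ ω, emp ω ∂P = μ := by
    simpa [hemp] using integral_inv_card_smul_sum (fun i => (hXs2 i).integrable one_le_two)
      fun i => ((hXs i).integral_eq).trans hμ.symm
  have hgain : Δαstar - Δ = -(Δ ^ 2 / (Δ + ‖fstar - μ‖ ^ 2)) := by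
    rw [hΔαstar, integral_norm_shrink_sub_sq hemp2 hemp_mean, ← hΔ]
    exact sq_mul_add_one_sub_sq_mul_sub_of_eq_div hsum_pos.ne' hαstar
  refine ⟨⟨hαstar ▸ div_pos hΔpos hsum_pos, ?_⟩, hgain, ?_⟩
  · rw [hαstar, div_le_one hsum_pos]
    exact le_add_of_nonneg_right (sq_nonneg _)
  · linarith [div_pos (pow_pos hΔpos 2) hsum_pos]

/-- If `Δ > 0`, the choice `α* = Δ/(Δ + ‖f*-μ‖²)` satisfies `0 < α* ≤ 1` and the
shrinkage estimator `μ̂_{α*} = α* f* + (1-α*) μ̂` has strictly smaller risk than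
the empirical mean: `Δ_{α*} - Δ = -Δ²/(Δ + ‖f*-μ‖²) < 0`. -/
theorem shrinkage_strictly_improves
    {Ω : Type*} [MeasurableSpace Ω] (P : Measure Ω) [IsProbabilityMeasure P]
    {H : Type*} [NormedAddCommGroup H] [InnerProductSpace ℝ H] [CompleteSpace H]
    [MeasurableSpace H] [BorelSpace H] [SecondCountableTopology H]
    (n : ℕ) (hn : 0 < n)
    (X : Ω → H) (Xs : Fin n → Ω → H)
    (hmeas : ∀ i, Measurable (Xs i))
    (hX2 : MemLp X 2 P)
    (hindep : iIndepFun Xs P)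
    (hident : ∀ i, Measure.map (Xs i) P = Measure.map X P)
    (μ : H) (hμ : μ = ∫ ω, X ω ∂P)
    (emp : Ω → H) (hemp : emp = fun ω => (n : ℝ)⁻¹ • (∑ i, Xs i ω))
    (Δ : ℝ) (hΔ : Δ = ∫ ω, ‖emp ω - μ‖ ^ 2 ∂P)
    (hΔpos : 0 < Δ)
    (fstar : H)
    (αstar : ℝ) (hαstar : αstar = Δ / (Δ + ‖fstar - μ‖ ^ 2))
    (Δαstar : ℝ)
    (hΔαstar : Δαstar = ∫ ω, ‖αstar • fstar + (1 - αstar) • emp ω - μ‖ ^ 2 ∂P) :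
    (0 < αstar ∧ αstar ≤ 1) ∧
      Δαstar - Δ = -(Δ ^ 2 / (Δ + ‖fstar - μ‖ ^ 2)) ∧
      Δαstar < Δ :=
  shrinkage_strictly_improves_general P n hn X Xs hmeas hX2 hident μ hμ emp hemp Δ hΔ hΔpos fstar
    αstar hαstar Δαstar hΔαstar
end

section
/- With ρ = (1/n²)∑_{i,j}⟨xᵢ,xⱼ⟩ and ϱ = (1/n)∑ᵢ‖xᵢ‖² as above, if (n−2)ρ + ϱ/n > 0 then the quadratic α ↦ LOOCV(α) is minimized at α* = (ϱ − ρ)/((n−2)ρ + ϱ/n); equivalently the optimal shrinkage parameter under α = λ/(1+λ) is λ* = (ϱ − ρ)/((n−1)ρ + ϱ/n − ϱ). -/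
/-!
With `s = ∑ j, x j`, each leave-one-out mean is `(s - x i) / (n - 1)`, so `LOOCV` is a quadratic
in `c = (1 - α) / (n - 1)` whose coefficients only involve `‖s‖² = n²ρ` and `∑ i, ‖x i‖² = nϱ`.
Its leading coefficient is a positive multiple of `(n - 2)ρ + ϱ/n`, so it is minimised at its
vertex, which is `α = α*`. The `λ`-form is the identity `a / (d + a) = (a/d) / (1 + a/d)`.
-/

open scoped RealInnerProductSpace

open Finset

section LeaveOneOut

variable {H : Type*} [NormedAddCommGroup H] [InnerProductSpace ℝ H]

theorem norm_sum_sq_eq_sum_sum_inner {ι : Type*} (s : Finset ι) (x : ι → H) :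
    ‖∑ i ∈ s, x i‖ ^ 2 = ∑ i ∈ s, ∑ j ∈ s, ⟪x i, x j⟫ := by
  rw [← real_inner_self_eq_norm_sq, sum_inner]
  simp only [inner_sum]

theorem sum_norm_smul_sum_erase_sub_sq {ι : Type*} [Fintype ι] [DecidableEq ι]
    (x : ι → H) (c : ℝ) :
    ∑ i, ‖c • ∑ j ∈ univ.erase i, x j - x i‖ ^ 2 =
      ((Fintype.card ι - 2) * ‖∑ i, x i‖ ^ 2 + ∑ i, ‖x i‖ ^ 2) * c ^ 2
        - 2 * (‖∑ i, x i‖ ^ 2 - ∑ i, ‖x i‖ ^ 2) * c + ∑ i, ‖x i‖ ^ 2 := by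
  set s := ∑ i, x i
  have hterm : ∀ i, ‖c • ∑ j ∈ univ.erase i, x j - x i‖ ^ 2 =
      c ^ 2 * ‖s‖ ^ 2 - 2 * c * (c + 1) * ⟪s, x i⟫ + (c + 1) ^ 2 * ‖x i‖ ^ 2 := by
    intro i
    have hx : c • x i + x i = (c + 1) • x i := by rw [add_smul, one_smul]
    rw [sum_erase_eq_sub (mem_univ i), smul_sub, sub_sub, hx, norm_sub_sq_real,
      norm_smul, norm_smul, real_inner_smul_left, real_inner_smul_right, mul_pow, mul_pow,
      Real.norm_eq_abs, Real.norm_eq_abs, sq_abs, sq_abs]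
    ring
  have hinner : ∑ i, ⟪s, x i⟫ = ‖s‖ ^ 2 := by
    rw [← inner_sum, real_inner_self_eq_norm_sq]
  simp only [hterm, sum_add_distrib, sum_sub_distrib, sum_const, card_univ, nsmul_eq_mul,
    ← mul_sum, hinner]
  ring

end LeaveOneOut

theorem quadratic_le_of_mul_eq {a b c₀ : ℝ} (ha : 0 ≤ a) (hc₀ : a * c₀ = b) (c : ℝ) :
    a * c₀ ^ 2 - 2 * b * c₀ ≤ a * c ^ 2 - 2 * b * c := by
  have : a * c ^ 2 - 2 * b * c - (a * c₀ ^ 2 - 2 * b * c₀) = a * (c - c₀) ^ 2 := by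
    rw [← hc₀]; ring
  linarith [mul_nonneg ha (sq_nonneg (c - c₀))]

theorem div_add_self_eq_div_div_one_add_div {a d : ℝ} (hd : d ≠ 0) :
    a / (d + a) = a / d / (1 + a / d) := by
  rw [one_add_div hd, div_div_div_cancel_right₀ hd]

/-- If `(n-2)ρ + ϱ/n > 0`, the LOOCV score is minimized at
`α* = (ϱ-ρ)/((n-2)ρ + ϱ/n)`; equivalently, under `α = λ/(1+λ)`, the optimal
shrinkage parameter is `λ* = (ϱ-ρ)/((n-1)ρ + ϱ/n - ϱ)`. -/
theorem skmse_loocv_minimizer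
    {H : Type*} [NormedAddCommGroup H] [InnerProductSpace ℝ H]
    (n : ℕ) (hn : 2 ≤ n) (x : Fin n → H)
    (μloo : Fin n → H)
    (hμloo : μloo = fun i => ((n : ℝ) - 1)⁻¹ • ∑ j ∈ Finset.univ.erase i, x j)
    (LOOCV : ℝ → ℝ)
    (hLOOCV : LOOCV = fun α => (n : ℝ)⁻¹ * ∑ i, ‖(1 - α) • μloo i - x i‖ ^ 2)
    (ρ ϱ : ℝ)
    (hρ : ρ = (n : ℝ)⁻¹ ^ 2 * ∑ i, ∑ j, ⟪x i, x j⟫)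
    (hϱ : ϱ = (n : ℝ)⁻¹ * ∑ i, ‖x i‖ ^ 2)
    (hden : 0 < ((n : ℝ) - 2) * ρ + ϱ / n)
    (αstar : ℝ) (hαstar : αstar = (ϱ - ρ) / (((n : ℝ) - 2) * ρ + ϱ / n))
    (lamstar : ℝ)
    (hlamstar : lamstar = (ϱ - ρ) / (((n : ℝ) - 1) * ρ + ϱ / n - ϱ)) :
    (∀ α : ℝ, LOOCV αstar ≤ LOOCV α) ∧
      (((n : ℝ) - 1) * ρ + ϱ / n - ϱ ≠ 0 → αstar = lamstar / (1 + lamstar)) := by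
  subst hμloo hLOOCV hαstar hlamstar
  refine ⟨fun α => ?_, fun hD => ?_⟩
  · have hn' : (2 : ℝ) ≤ n := by exact_mod_cast hn
    rw [← norm_sum_sq_eq_sum_sum_inner] at hρ
    have hD : ((n : ℝ) - 2) * ρ + ϱ / n =
        ((n - 2) * ‖∑ i, x i‖ ^ 2 + ∑ i, ‖x i‖ ^ 2) / n ^ 2 := by
      rw [hρ, hϱ]; field_simp
    have hE : 0 < ((n : ℝ) - 2) * ‖∑ i, x i‖ ^ 2 + ∑ i, ‖x i‖ ^ 2 := by
      rw [hD] at hden; exact (div_pos_iff_of_pos_right (by positivity)).mp hden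
    simp only [smul_smul, sum_norm_smul_sum_erase_sub_sq, Fintype.card_fin]
    refine mul_le_mul_of_nonneg_left (add_le_add_left ?_ _) (by positivity)
    apply quadratic_le_of_mul_eq hE.le
    have hn1 : (n : ℝ) - 1 ≠ 0 := by linarith
    rw [hD, hρ, hϱ]
    field_simp
    ring
  · rw [show ((n : ℝ) - 2) * ρ + ϱ / n = ((n - 1) * ρ + ϱ / n - ϱ) + (ϱ - ρ) by ring]
    exact div_add_self_eq_div_div_one_add_div hD
end
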